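/- Let μ be a non-atomic Borel probability measure whose topological support is exactly F, where F is a fractal subset of [0,1] satisfying the lacunarity condition with constant λ ∈ (0,1]. Let q ∈ ℝ, a ≥ 2/λ and b > 0. Then there exist constants η₁, η₂, c₁, c₂ > 0 and r₀ > 0 such that for all 0 < r ≤ r₀: c₁ · Σ_{n : λη₁r ≤ |I_n| ≤ η₁r} μ(Ī_n^a)^q ≤ Σ_{B ∈ B_r^*} μ(B̄^b)^q ≤ c₂ · Σ_{n : λη₂r ≤ |I_n| ≤ η₂r} μ(Ī_n^a)^q. -/

import Mathlib

open MeasureTheory Filter Set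
open scoped Classical

noncomputable section

/-- The enlargement `B̄^a` of the interval `[s,t]` by the factor `1+a` about its centre. -/
def enlarge (a s t : ℝ) : Set ℝ :=
  Set.Icc (s - a * (t - s) / 2) (t + a * (t - s) / 2)

/-- The moment sum `Σ_{B ∈ B_r^*} μ(B̄^a)^q` over grid intervals of length `r`
whose interior meets the support of `μ` (i.e. with `μ(B) > 0`). -/
def gridSum (μ : Measure ℝ) (a q R : ℝ) : ℝ :=
  ∑' m : ℤ, if 0 < μ (Set.Icc ((m : ℝ) * R) (((m : ℝ) + 1) * R))
    then (μ (enlarge a ((m : ℝ) * R) (((m : ℝ) + 1) * R))).toReal ^ q else 0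

/-- The coarse multifractal moment function
`β_a(q) = inf{β : limsup_{r→0⁺} r^β Σ_{B ∈ B_r^*} μ(B̄^a)^q = 0}`.
(For the nonnegative quantity `r^β · Σ…`, vanishing of the `limsup` as `r → 0⁺`
is the same as convergence to `0`.) -/
def betaA (μ : Measure ℝ) (a q : ℝ) : ℝ :=
  sInf {β : ℝ | Filter.Tendsto (fun R => R ^ β * gridSum μ a q R)
    (nhdsWithin 0 (Set.Ioi 0)) (nhds 0)}

/-- `F` is a "fractal subset" of `[0,1]`: compact, Lebesgue-null, containing `0` and `1`. -/
def IsFractalSubset (F : Set ℝ) : Prop :=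
  IsCompact F ∧ F ⊆ Set.Icc 0 1 ∧ (0 : ℝ) ∈ F ∧ (1 : ℝ) ∈ F ∧ MeasureTheory.volume F = 0

/-- The complementary intervals `I_n = (l n, r n)` of `F` in `[0,1]`, enumerated with
nonincreasing lengths. -/
structure FractalComplement (F : Set ℝ) where
  l : ℕ → ℝ
  r : ℕ → ℝ
  lt : ∀ n, l n < r n
  disj : Pairwise fun n m => Disjoint (Set.Ioo (l n) (r n)) (Set.Ioo (l m) (r m))
  union : (⋃ n, Set.Ioo (l n) (r n)) = Set.Icc (0 : ℝ) 1 \ F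
  mono : ∀ n, r (n + 1) - l (n + 1) ≤ r n - l n

/-- The length `|I_n|` of the `n`-th complementary interval. -/
def FractalComplement.len {F : Set ℝ} (c : FractalComplement F) (n : ℕ) : ℝ := c.r n - c.l n

/-- The enlargement `Ī_n^a` of the closure of the complementary interval `I_n`. -/
def FractalComplement.I {F : Set ℝ} (c : FractalComplement F) (a : ℝ) (n : ℕ) : Set ℝ :=
  enlarge a (c.l n) (c.r n)

/-- The lacunarity condition with constant `lam`: every interval `[x-r, x+r]` with `x ∈ F`
and `0 < r ≤ 1` contains a complementary interval of length at least `lam * r`. -/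
def Lacunary {F : Set ℝ} (c : FractalComplement F) (lam : ℝ) : Prop :=
  ∀ x ∈ F, ∀ R : ℝ, 0 < R → R ≤ 1 → ∃ n,
    Set.Ioo (c.l n) (c.r n) ⊆ Set.Icc (x - R) (x + R) ∧ lam * R ≤ c.len n

/-- The topological support of `μ` is exactly `F`. -/
def HasSupport (μ : Measure ℝ) (F : Set ℝ) : Prop :=
  μ Fᶜ = 0 ∧ ∀ x ∈ F, ∀ ε : ℝ, 0 < ε → 0 < μ (Set.Ioo (x - ε) (x + ε))

/-!
Lacunarity makes the grid of mesh `r` and the complementary intervals of length `≍ r`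
comparable. Each interval `I_n` of length in `[λη r, η r]` is attached to the grid cell containing
its left endpoint (a point of `F = supp μ`, so some such cell has positive mass), and each cell
meeting `F` is attached to an interval of comparable length near one of its points, provided by
lacunarity. Disjointness of the `I_n` and the lattice structure of the grid bound the multiplicities
of both attachments, and for a suitable choice of `η` the enlarged sets are nested in the direction
that makes `x ↦ x ^ q` monotone. The only case where nesting fails is the upper bound for `q ≥ 0`:
there one covers `F ∩ B̄^b` by the at most `(3 + b) / λ` sets `Ī_n^a` that lacunarity provides at
scale `r`, which is where `a ≥ 2 / λ` is needed.
-/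

theorem Real.Ioo_subset_Icc_iff {a b c d : ℝ} (h : a < b) :
    Ioo a b ⊆ Icc c d ↔ c ≤ a ∧ b ≤ d := by
  rw [← Icc_subset_Icc_iff h.le, ← closure_Ioo h.ne]
  exact ⟨fun hs => closure_minimal hs isClosed_Icc, subset_closure.trans⟩

theorem tsum_ite_eq_sum_toFinset {α : Type*} {p : α → Prop} [DecidablePred p]
    (h : {x | p x}.Finite) (f : α → ℝ) :
    (∑' x, if p x then f x else 0) = ∑ x ∈ h.toFinset, f x := by
  rw [tsum_eq_sum (s := h.toFinset) fun x hx => if_neg (by simpa using hx)]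
  exact Finset.sum_congr rfl fun x hx => if_pos (by simpa using hx)

theorem Finset.sum_sum_le_mul_sum {ι κ : Type*} [DecidableEq κ] {s : Finset ι} {t : Finset κ}
    {N : ι → Finset κ} {g : κ → ℝ} {M : ℝ} (hN : ∀ i ∈ s, N i ⊆ t) (hg : ∀ j ∈ t, 0 ≤ g j)
    (hM : ∀ j ∈ t, ((s.filter (j ∈ N ·)).card : ℝ) ≤ M) :
    ∑ i ∈ s, ∑ j ∈ N i, g j ≤ M * ∑ j ∈ t, g j := by
  rw [Finset.sum_comm' (t' := t) (s' := fun j => s.filter (j ∈ N ·)), Finset.mul_sum]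
  · refine Finset.sum_le_sum fun j hj => ?_
    rw [Finset.sum_const, nsmul_eq_mul]
    exact mul_le_mul_of_nonneg_right (hM j hj) (hg j hj)
  · intro i j
    rw [Finset.mem_filter]
    exact ⟨fun h => ⟨h, hN i h.1 h.2⟩, And.left⟩

theorem Finset.sum_le_mul_sum_of_le_comp {ι κ : Type*} [DecidableEq κ] {s : Finset ι} {t : Finset κ}
    {f : ι → ℝ} {g : κ → ℝ} {φ : ι → κ} {M : ℝ} (hφ : ∀ i ∈ s, φ i ∈ t)
    (hfg : ∀ i ∈ s, f i ≤ g (φ i)) (hg : ∀ j ∈ t, 0 ≤ g j)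
    (hM : ∀ j ∈ t, ((s.filter (φ · = j)).card : ℝ) ≤ M) :
    ∑ i ∈ s, f i ≤ M * ∑ j ∈ t, g j :=
  calc ∑ i ∈ s, f i ≤ ∑ i ∈ s, ∑ j ∈ {φ i}, g j := by simpa using Finset.sum_le_sum hfg
    _ ≤ M * ∑ j ∈ t, g j :=
      Finset.sum_sum_le_mul_sum (by simpa using hφ) hg (by simpa [eq_comm] using hM)

theorem Real.rpow_le_mul_sum_rpow {ι : Type*} {s : Finset ι} {y : ι → ℝ} {x K q : ℝ}
    (hx : 0 < x) (hxy : x ≤ ∑ i ∈ s, y i) (hy : ∀ i ∈ s, 0 ≤ y i) (hK : (s.card : ℝ) ≤ K)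
    (hq : 0 ≤ q) : x ^ q ≤ K ^ q * ∑ i ∈ s, y i ^ q := by
  obtain ⟨i₀, hi₀, hmax⟩ :=
    s.exists_max_image y (Finset.nonempty_of_sum_ne_zero (hx.trans_le hxy).ne')
  have hK0 : 0 ≤ K := (Nat.cast_nonneg _).trans hK
  have hx_le : x ≤ K * y i₀ :=
    calc x ≤ ∑ i ∈ s, y i := hxy
      _ ≤ s.card * y i₀ := by simpa using Finset.sum_le_card_nsmul s y _ hmax
      _ ≤ K * y i₀ := mul_le_mul_of_nonneg_right hK (hy i₀ hi₀)
  calc x ^ q ≤ (K * y i₀) ^ q := Real.rpow_le_rpow hx.le hx_le hq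
    _ = K ^ q * y i₀ ^ q := Real.mul_rpow hK0 (hy i₀ hi₀)
    _ ≤ K ^ q * ∑ i ∈ s, y i ^ q :=
      mul_le_mul_of_nonneg_left
        (Finset.single_le_sum (fun i hi => Real.rpow_nonneg (hy i hi) q) hi₀)
        (Real.rpow_nonneg hK0 q)

theorem Int.card_le_of_near {s : Finset ℤ} {x δ R : ℝ} (hδ : 0 ≤ δ) (hR : 0 < R)
    (hs : ∀ m ∈ s, m * R - δ ≤ x ∧ x ≤ (m + 1) * R + δ) : (s.card : ℝ) ≤ 2 * δ / R + 2 := by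
  set u := (x - δ) / R - 1
  set v := (x + δ) / R
  have hsub : s ⊆ Finset.Icc ⌈u⌉ ⌊v⌋ := fun m hm => by
    obtain ⟨h1, h2⟩ := hs m hm
    rw [Finset.mem_Icc, Int.ceil_le, Int.le_floor, sub_le_iff_le_add, div_le_iff₀ hR,
      le_div_iff₀ hR]
    constructor <;> linarith
  have hvu : v - u + 1 = 2 * δ / R + 2 := by
    simp only [u, v]
    field_simp
    ring
  calc (s.card : ℝ) ≤ (Finset.Icc ⌈u⌉ ⌊v⌋).card := by exact_mod_cast Finset.card_le_card hsub
    _ = ((max (⌊v⌋ + 1 - ⌈u⌉) 0 : ℤ) : ℝ) := by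
      rw [Int.card_Icc, ← Int.toNat_eq_max, Int.cast_natCast]
    _ ≤ 2 * δ / R + 2 := by
      push_cast
      exact max_le (by linarith [Int.floor_le v, Int.le_ceil u]) (by positivity)

theorem enlarge_subset_enlarge_of_near {a b s t s' t' δ : ℝ} (hs : s - δ ≤ s')
    (ht : t' ≤ t + δ) (h : a * (t' - s') + 2 * δ ≤ b * (t - s)) :
    enlarge a s' t' ⊆ enlarge b s t :=
  Icc_subset_Icc (by linarith) (by linarith)

theorem enlarge_subset_enlarge_of_mem {a b s t s' t' : ℝ} (hs' : s' ∈ Icc s t) (hst' : s' ≤ t')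
    (h : (2 + b) * (t - s) ≤ a * (t' - s')) : enlarge b s t ⊆ enlarge a s' t' :=
  Icc_subset_Icc (by linarith [hs'.2]) (by linarith [hs'.1])

theorem mem_enlarge_of_near {a s t x δ : ℝ} (hx : x ∈ Icc (s - δ) (t + δ))
    (h : 2 * δ ≤ a * (t - s)) : x ∈ enlarge a s t :=
  ⟨by linarith [hx.1], by linarith [hx.2]⟩

theorem Icc_subset_enlarge {b s t : ℝ} (hb : 0 ≤ b) (hst : s ≤ t) : Icc s t ⊆ enlarge b s t :=
  Icc_subset_Icc (by nlinarith) (by nlinarith)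

def cell (R : ℝ) (m : ℤ) : Set ℝ := Icc (m * R) ((m + 1) * R)

theorem enlarge_cell (b R : ℝ) (m : ℤ) :
    enlarge b (m * R) ((m + 1) * R) = Icc (m * R - b * R / 2) ((m + 1) * R + b * R / 2) := by
  unfold enlarge
  congr 1 <;> ring

theorem cell_subset_enlarge {b R : ℝ} (hb : 0 ≤ b) (hR : 0 ≤ R) (m : ℤ) :
    cell R m ⊆ enlarge b (m * R) ((m + 1) * R) :=
  Icc_subset_enlarge hb (by linarith)

namespace HasSupport

variable {μ : Measure ℝ} {F : Set ℝ}

theorem measure_pos_of_isOpen (h : HasSupport μ F) {U : Set ℝ} (hU : IsOpen U) {x : ℝ}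
    (hxF : x ∈ F) (hxU : x ∈ U) : 0 < μ U := by
  obtain ⟨ε, hε, hball⟩ := Metric.isOpen_iff.1 hU x hxU
  rw [Real.ball_eq_Ioo] at hball
  exact (h.2 x hxF ε hε).trans_le (measure_mono hball)

theorem exists_mem_of_measure_pos (h : HasSupport μ F) {s : Set ℝ} (hs : 0 < μ s) :
    ∃ x ∈ F, x ∈ s := by
  by_contra! hFs
  exact hs.ne' (measure_mono_null (fun y hy hyF => hFs y hyF hy) h.1)

theorem exists_cell (h : HasSupport μ F) {x R : ℝ} (hx : x ∈ F) (hR : 0 < R) :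
    ∃ m : ℤ, x ∈ cell R m ∧ 0 < μ (cell R m) := by
  set m := ⌊x / R⌋
  have h1 : m * R ≤ x := (le_div_iff₀ hR).1 (Int.floor_le _)
  have h2 : x < (m + 1) * R := (div_lt_iff₀ hR).1 (Int.lt_floor_add_one _)
  rcases h1.lt_or_eq with h1 | hx_eq
  · exact ⟨m, ⟨h1.le, h2.le⟩, (h.measure_pos_of_isOpen isOpen_Ioo hx ⟨h1, h2⟩).trans_le
      (measure_mono Ioo_subset_Icc_self)⟩
  · -- `x` is a grid point: the two cells meeting at `x` cover a neighbourhood of it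
    have hcover : Ioo (x - R) (x + R) ⊆ cell R (m - 1) ∪ cell R m := by
      intro y hy
      rcases le_total y x with hy' | hy'
      · exact Or.inl ⟨by push_cast; linarith [hy.1], by push_cast; linarith⟩
      · exact Or.inr ⟨by linarith, by linarith [hy.2]⟩
    have hpos := (h.2 x hx R hR).trans_le ((measure_mono hcover).trans (measure_union_le _ _))
    rcases add_pos_iff.1 hpos with hpos | hpos
    · exact ⟨m - 1, ⟨by push_cast; linarith, by push_cast; linarith⟩, hpos⟩
    · exact ⟨m, ⟨hx_eq.le, h2.le⟩, hpos⟩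

theorem finite_setOf_cell (h : HasSupport μ F) (hF : F ⊆ Icc 0 1) {R : ℝ} (hR : 0 < R) :
    {m : ℤ | 0 < μ (cell R m)}.Finite :=
  (Set.finite_Icc (-1) ⌈1 / R⌉).subset fun m hm => by
    obtain ⟨x, hxF, hx1, hx2⟩ := h.exists_mem_of_measure_pos hm
    obtain ⟨hx0, hx1'⟩ := hF hxF
    have hm1 : (-1 : ℝ) ≤ m := by nlinarith
    have hm2 : (m : ℝ) ≤ 1 / R := (le_div_iff₀ hR).2 (by linarith)
    exact ⟨by exact_mod_cast hm1, Int.cast_le.1 (hm2.trans (Int.le_ceil _))⟩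

end HasSupport

theorem gridSum_eq_sum {μ : Measure ℝ} {R : ℝ} (h : {m : ℤ | 0 < μ (cell R m)}.Finite)
    (b q : ℝ) :
    gridSum μ b q R = ∑ m ∈ h.toFinset, μ.real (enlarge b (m * R) ((m + 1) * R)) ^ q :=
  tsum_ite_eq_sum_toFinset h _

namespace FractalComplement

variable {F : Set ℝ} (c : FractalComplement F)

def band (lo hi : ℝ) : Set ℕ := {n | lo ≤ c.len n ∧ c.len n ≤ hi}

def bandSum (μ : Measure ℝ) (a q lo hi : ℝ) : ℝ :=
  ∑' n : ℕ, if lo ≤ c.len n ∧ c.len n ≤ hi then μ.real (c.I a n) ^ q else 0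

theorem bandSum_eq_sum {lo hi : ℝ} (h : (c.band lo hi).Finite) (μ : Measure ℝ) (a q : ℝ) :
    c.bandSum μ a q lo hi = ∑ n ∈ h.toFinset, μ.real (c.I a n) ^ q :=
  tsum_ite_eq_sum_toFinset h _

theorem Ioo_subset_diff (n : ℕ) : Ioo (c.l n) (c.r n) ⊆ Icc 0 1 \ F :=
  c.union ▸ subset_iUnion (fun n => Ioo (c.l n) (c.r n)) n

theorem l_mem (n : ℕ) : c.l n ∈ F := by
  by_contra hl
  obtain ⟨hl0, hr1⟩ :=
    (Real.Ioo_subset_Icc_iff (c.lt n)).1 ((c.Ioo_subset_diff n).trans sdiff_subset)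
  have hmem : c.l n ∈ ⋃ k, Ioo (c.l k) (c.r k) :=
    c.union ▸ ⟨⟨hl0, (c.lt n).le.trans hr1⟩, hl⟩
  obtain ⟨k, hk⟩ := mem_iUnion.1 hmem
  have hkn : k ≠ n := by
    rintro rfl
    exact lt_irrefl _ hk.1
  have hdisj : Disjoint _ _ := c.disj hkn
  rw [Set.disjoint_iff_inter_eq_empty, Ioo_inter_Ioo, Ioo_eq_empty_iff] at hdisj
  simp only [max_lt_iff, lt_min_iff] at hdisj
  exact hdisj ⟨⟨c.lt k, hk.2⟩, hk.1.trans (c.lt n), c.lt n⟩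

theorem measure_I_pos {μ : Measure ℝ} (hsupp : HasSupport μ F) {a : ℝ} (ha : 0 < a) (n : ℕ) :
    0 < μ (c.I a n) := by
  have hlr := c.lt n
  refine (hsupp.measure_pos_of_isOpen isOpen_Ioo (c.l_mem n) ?_).trans_le
    (measure_mono Ioo_subset_Icc_self)
  constructor <;> nlinarith

theorem card_mul_le {s : Finset ℕ} {u v δ : ℝ} (huv : u ≤ v)
    (hs : ∀ n ∈ s, Ioo (c.l n) (c.r n) ⊆ Icc u v ∧ δ ≤ c.len n) : s.card * δ ≤ v - u :=
  calc s.card * δ = ∑ _n ∈ s, δ := by simp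
    _ ≤ ∑ n ∈ s, c.len n := Finset.sum_le_sum fun n hn => (hs n hn).2
    _ = volume.real (⋃ n ∈ s, Ioo (c.l n) (c.r n)) := by
      rw [measureReal_biUnion_finset (fun m _ n _ h => c.disj h) (fun _ _ => measurableSet_Ioo)
        fun _ _ => measure_Ioo_lt_top.ne]
      exact Finset.sum_congr rfl fun n _ => (Real.volume_real_Ioo_of_le (c.lt n).le).symm
    _ ≤ volume.real (Icc u v) :=
      measureReal_mono (iUnion₂_subset fun n hn => (hs n hn).1) measure_Icc_lt_top.ne
    _ = v - u := Real.volume_real_Icc_of_le huv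

theorem finite_band {lo : ℝ} (hlo : 0 < lo) (hi : ℝ) : (c.band lo hi).Finite := by
  by_contra hinf
  obtain ⟨s, hs, hcard⟩ := Set.Infinite.exists_subset_card_eq hinf (⌊lo⁻¹⌋₊ + 1)
  have hle := c.card_mul_le zero_le_one fun n hn =>
    ⟨(c.Ioo_subset_diff n).trans sdiff_subset, (hs hn).1⟩
  have hlt := (inv_lt_iff_one_lt_mul₀ hlo).1 (Nat.lt_floor_add_one lo⁻¹)
  rw [hcard] at hle
  push_cast at hle
  linarith

end FractalComplement

theorem Lacunary.exists_band {F : Set ℝ} {c : FractalComplement F} {lam : ℝ}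
    (hlac : Lacunary c lam) {x σ : ℝ} (hx : x ∈ F) (hσ : 0 < σ) (hσ1 : σ ≤ 1) :
    ∃ n, Ioo (c.l n) (c.r n) ⊆ Icc (x - σ) (x + σ) ∧ n ∈ c.band (lam * σ) σ := by
  obtain ⟨n, hsub, hlen⟩ := hlac x hx σ hσ hσ1
  obtain ⟨hl, hr⟩ := (Real.Ioo_subset_Icc_iff (c.lt n)).1 hsub
  have hxn : x ∉ Ioo (c.l n) (c.r n) := fun h => (c.Ioo_subset_diff n h).2 hx
  refine ⟨n, hsub, hlen, ?_⟩
  rw [mem_Ioo, not_and_or, not_lt, not_lt] at hxn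
  unfold FractalComplement.len
  rcases hxn with h | h <;> linarith

namespace FractalComplement

variable {F : Set ℝ} (c : FractalComplement F) {μ : Measure ℝ}
  {lam q a b η R : ℝ}

theorem mul_bandSum_le_gridSum_of_le (hF : F ⊆ Icc 0 1) (hsupp : HasSupport μ F)
    (hlam : 0 < lam) (hη : 0 < η) (hR : 0 < R)
    (hcmp : ∀ n ∈ c.band (lam * η * R) (η * R), ∀ m : ℤ, c.l n ∈ cell R m →
      0 < μ (cell R m) → μ.real (c.I a n) ^ q ≤ μ.real (enlarge b (m * R) ((m + 1) * R)) ^ q) :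
    lam * η / (1 + η) * c.bandSum μ a q (lam * η * R) (η * R) ≤ gridSum μ b q R := by
  have hband := c.finite_band (by positivity : 0 < lam * η * R) (η * R)
  have hgrid := hsupp.finite_setOf_cell hF hR
  choose φ hφ using fun n => hsupp.exists_cell (c.l_mem n) hR
  have hle : c.bandSum μ a q (lam * η * R) (η * R) ≤ (1 + η) / (lam * η) * gridSum μ b q R := by
    rw [c.bandSum_eq_sum hband, gridSum_eq_sum hgrid]
    refine Finset.sum_le_mul_sum_of_le_comp (φ := φ) (fun n _ => hgrid.mem_toFinset.2 (hφ n).2)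
      (fun n hn => hcmp n (hband.mem_toFinset.1 hn) _ (hφ n).1 (hφ n).2)
      (fun _ _ => Real.rpow_nonneg measureReal_nonneg _) fun m _ => ?_
    -- the `I_n` attached to the cell `m` are disjoint, of length `≥ λ η R`,
    -- and lie in `[m R, (m + 1 + η) R]`
    have hcard := c.card_mul_le (s := hband.toFinset.filter (φ · = m)) (u := m * R)
      (v := (m + 1) * R + η * R) (δ := lam * η * R) (by nlinarith) fun n hn => by
        obtain ⟨hn, hnm⟩ := Finset.mem_filter.1 hn
        obtain ⟨hlo, hhi⟩ := hband.mem_toFinset.1 hn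
        obtain ⟨hl1, hl2⟩ := hnm ▸ (hφ n).1
        unfold len at hhi
        exact ⟨Ioo_subset_Icc_self.trans (Icc_subset_Icc hl1 (by linarith)), hlo⟩
    rw [le_div_iff₀ (by positivity)]
    nlinarith
  calc lam * η / (1 + η) * c.bandSum μ a q (lam * η * R) (η * R)
      ≤ lam * η / (1 + η) * ((1 + η) / (lam * η) * gridSum μ b q R) :=
        mul_le_mul_of_nonneg_left hle (by positivity)
    _ = gridSum μ b q R := by field_simp

theorem gridSum_le_mul_bandSum_of_le (hF : F ⊆ Icc 0 1) (hsupp : HasSupport μ F)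
    (hlam : 0 < lam) (hη : 0 < η) (hR : 0 < R)
    (hcmp : ∀ m : ℤ, 0 < μ (cell R m) → ∃ n ∈ c.band (lam * η * R) (η * R),
      m * R - η * R ≤ c.l n ∧ c.l n ≤ (m + 1) * R + η * R ∧
      μ.real (enlarge b (m * R) ((m + 1) * R)) ^ q ≤ μ.real (c.I a n) ^ q) :
    gridSum μ b q R ≤ (2 * η + 2) * c.bandSum μ a q (lam * η * R) (η * R) := by
  have hband := c.finite_band (by positivity : 0 < lam * η * R) (η * R)
  have hgrid := hsupp.finite_setOf_cell hF hR
  choose! φ hφ using hcmp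
  rw [c.bandSum_eq_sum hband, gridSum_eq_sum hgrid]
  refine Finset.sum_le_mul_sum_of_le_comp (φ := φ)
    (fun m hm => hband.mem_toFinset.2 (hφ m (hgrid.mem_toFinset.1 hm)).1)
    (fun m hm => (hφ m (hgrid.mem_toFinset.1 hm)).2.2.2)
    (fun _ _ => Real.rpow_nonneg measureReal_nonneg _) fun n _ => ?_
  have hcard := Int.card_le_of_near (s := hgrid.toFinset.filter (φ · = n)) (x := c.l n)
    (δ := η * R) (by positivity) hR fun m hm => by
      obtain ⟨hm, hmn⟩ := Finset.mem_filter.1 hm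
      obtain ⟨-, hl, hr, -⟩ := hφ m (hgrid.mem_toFinset.1 hm)
      exact hmn ▸ ⟨hl, hr⟩
  rwa [show 2 * (η * R) / R = 2 * η by field_simp] at hcard

theorem mul_bandSum_le_gridSum_of_nonneg [IsFiniteMeasure μ] (hF : F ⊆ Icc 0 1)
    (hsupp : HasSupport μ F) (hlam : 0 < lam) (hη : 0 < η) (ha : 0 ≤ a)
    (hηb : (2 + a) * η ≤ b) (hq : 0 ≤ q) (hR : 0 < R) :
    lam * η / (1 + η) * c.bandSum μ a q (lam * η * R) (η * R) ≤ gridSum μ b q R :=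
  c.mul_bandSum_le_gridSum_of_le hF hsupp hlam hη hR fun n hn m hm _ => by
    obtain ⟨-, hhi⟩ := hn
    have hlen : a * c.len n ≤ a * (η * R) := mul_le_mul_of_nonneg_left hhi ha
    unfold len at hhi hlen
    refine Real.rpow_le_rpow measureReal_nonneg (measureReal_mono
      (enlarge_subset_enlarge_of_near (δ := η * R) ?_ ?_ ?_)) hq
    · nlinarith [hm.1]
    · linarith [hm.2]
    · nlinarith

theorem mul_bandSum_le_gridSum_of_neg [IsFiniteMeasure μ] (hF : F ⊆ Icc 0 1)
    (hsupp : HasSupport μ F) (hlam : 0 < lam) (hη : 0 < η) (ha : 0 ≤ a) (hb : 0 ≤ b)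
    (haη : 2 + b ≤ a * lam * η) (hq : q < 0) (hR : 0 < R) :
    lam * η / (1 + η) * c.bandSum μ a q (lam * η * R) (η * R) ≤ gridSum μ b q R :=
  c.mul_bandSum_le_gridSum_of_le hF hsupp hlam hη hR fun n hn m hm hpos => by
    have hJ : 0 < μ (enlarge b (m * R) ((m + 1) * R)) :=
      hpos.trans_le (measure_mono (cell_subset_enlarge hb hR.le m))
    have hlen : a * (lam * η * R) ≤ a * c.len n := mul_le_mul_of_nonneg_left hn.1 ha
    unfold len at hlen
    refine Real.rpow_le_rpow_of_nonpos (ENNReal.toReal_pos hJ.ne' (measure_ne_top _ _))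
      (measureReal_mono (enlarge_subset_enlarge_of_mem hm (c.lt n).le ?_)) hq.le
    nlinarith

theorem gridSum_le_mul_bandSum_of_neg [IsFiniteMeasure μ] (hlac : Lacunary c lam) (hF : F ⊆ Icc 0 1)
    (hsupp : HasSupport μ F) (hlam : 0 < lam) (hη : 0 < η) (ha : 0 < a)
    (hηb : (2 + a) * η ≤ b) (hq : q < 0) (hR : 0 < R) (hR1 : η * R ≤ 1) :
    gridSum μ b q R ≤ (2 * η + 2) * c.bandSum μ a q (lam * η * R) (η * R) :=
  c.gridSum_le_mul_bandSum_of_le hF hsupp hlam hη hR fun m hm => by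
    obtain ⟨x, hxF, hx⟩ := hsupp.exists_mem_of_measure_pos hm
    obtain ⟨n, hsub, hn⟩ := hlac.exists_band hxF (by positivity) hR1
    obtain ⟨hl, hr⟩ := (Real.Ioo_subset_Icc_iff (c.lt n)).1 hsub
    have hlen : a * c.len n ≤ a * (η * R) := mul_le_mul_of_nonneg_left hn.2 ha.le
    unfold len at hlen
    have hI : c.I a n ⊆ enlarge b (m * R) ((m + 1) * R) :=
      enlarge_subset_enlarge_of_near (δ := η * R) (by linarith [hx.1]) (by linarith [hx.2])
        (by nlinarith)
    refine ⟨n, by rwa [mul_assoc], by linarith [hx.1], by linarith [hx.2, c.lt n], ?_⟩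
    exact Real.rpow_le_rpow_of_nonpos
      (ENNReal.toReal_pos (c.measure_I_pos hsupp ha n).ne' (measure_ne_top _ _))
      (measureReal_mono hI) hq.le

theorem measureReal_Icc_le_sum [IsFiniteMeasure μ] (hlac : Lacunary c lam)
    (hsupp : HasSupport μ F) (hlam : 0 < lam) (ha : 2 ≤ a * lam) (hR : 0 < R) (hR1 : R ≤ 1)
    {s t : ℝ} {N : Finset ℕ}
    (hN : ∀ n ∈ c.band (lam * R) R, Ioo (c.l n) (c.r n) ⊆ Icc (s - R) (t + R) → n ∈ N) :
    μ.real (Icc s t) ≤ ∑ n ∈ N, μ.real (c.I a n) := by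
  have ha0 : 0 ≤ a := by nlinarith
  have hcover : Icc s t ∩ F ⊆ ⋃ n ∈ N, c.I a n := by
    rintro y ⟨hy, hyF⟩
    obtain ⟨n, hsub, hn⟩ := hlac.exists_band hyF hR hR1
    obtain ⟨hl, hr⟩ := (Real.Ioo_subset_Icc_iff (c.lt n)).1 hsub
    have hlen : a * (lam * R) ≤ a * c.len n := mul_le_mul_of_nonneg_left hn.1 ha0
    unfold len at hlen
    refine mem_biUnion (hN n hn (hsub.trans (Icc_subset_Icc ?_ ?_))) ?_
    · linarith [hy.1]
    · linarith [hy.2]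
    · exact mem_enlarge_of_near (δ := R) ⟨by linarith [c.lt n], by linarith [c.lt n]⟩
        (by nlinarith)
  calc μ.real (Icc s t) = μ.real (Icc s t ∩ F) := by
        rw [measureReal_def, measureReal_def, measure_inter_conull hsupp.1]
    _ ≤ μ.real (⋃ n ∈ N, c.I a n) := measureReal_mono hcover (measure_ne_top _ _)
    _ ≤ ∑ n ∈ N, μ.real (c.I a n) := measureReal_biUnion_finset_le _ _

theorem measureReal_enlarge_cell_rpow_le [IsFiniteMeasure μ] (hlac : Lacunary c lam)
    (hsupp : HasSupport μ F) (hlam : 0 < lam) (ha : 2 ≤ a * lam) (hb : 0 ≤ b) (hq : 0 ≤ q)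
    (hR : 0 < R) (hR1 : R ≤ 1) {m : ℤ} (hm : 0 < μ (cell R m)) {N : Finset ℕ}
    (hN : ∀ n ∈ c.band (lam * R) R,
      Ioo (c.l n) (c.r n) ⊆ Icc (m * R - b * R / 2 - R) ((m + 1) * R + b * R / 2 + R) → n ∈ N)
    (hN' : ∀ n ∈ N, Ioo (c.l n) (c.r n) ⊆ Icc (m * R - b * R / 2 - R) ((m + 1) * R + b * R / 2 + R)
      ∧ lam * R ≤ c.len n) :
    μ.real (enlarge b (m * R) ((m + 1) * R)) ^ q
      ≤ ((3 + b) / lam) ^ q * ∑ n ∈ N, μ.real (c.I a n) ^ q := by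
  have hJ : 0 < μ.real (enlarge b (m * R) ((m + 1) * R)) := ENNReal.toReal_pos
    (hm.trans_le (measure_mono (cell_subset_enlarge hb hR.le m))).ne' (measure_ne_top _ _)
  rw [enlarge_cell] at hJ ⊢
  refine Real.rpow_le_mul_sum_rpow hJ (c.measureReal_Icc_le_sum hlac hsupp hlam ha hR hR1 hN)
    (fun _ _ => measureReal_nonneg) ?_ hq
  -- the `I_n`, `n ∈ N`, are disjoint, of length `≥ λ R`, in an interval of length `(3 + b) R`
  have hcard := c.card_mul_le (by nlinarith) hN'
  rw [le_div_iff₀ hlam]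
  nlinarith

theorem gridSum_le_mul_bandSum_of_nonneg [IsFiniteMeasure μ] (hlac : Lacunary c lam)
    (hF : F ⊆ Icc 0 1) (hsupp : HasSupport μ F) (hlam : 0 < lam) (ha : 2 ≤ a * lam)
    (hb : 0 ≤ b) (hq : 0 ≤ q) (hR : 0 < R) (hR1 : R ≤ 1) :
    gridSum μ b q R ≤ ((3 + b) / lam) ^ q * (4 + b) * c.bandSum μ a q (lam * R) R := by
  have hband := c.finite_band (by positivity : 0 < lam * R) R
  have hgrid := hsupp.finite_setOf_cell hF hR
  set N : ℤ → Finset ℕ := fun m => hband.toFinset.filter fun n =>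
    Ioo (c.l n) (c.r n) ⊆ Icc (m * R - b * R / 2 - R) ((m + 1) * R + b * R / 2 + R)
  have hterm : ∀ m ∈ hgrid.toFinset, μ.real (enlarge b (m * R) ((m + 1) * R)) ^ q
      ≤ ((3 + b) / lam) ^ q * ∑ n ∈ N m, μ.real (c.I a n) ^ q := fun m hm =>
    c.measureReal_enlarge_cell_rpow_le hlac hsupp hlam ha hb hq hR hR1 (hgrid.mem_toFinset.1 hm)
      (fun n hn hsub => Finset.mem_filter.2 ⟨hband.mem_toFinset.2 hn, hsub⟩)
      fun n hn => ⟨(Finset.mem_filter.1 hn).2, (hband.mem_toFinset.1 (Finset.mem_filter.1 hn).1).1⟩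
  -- an `I_n` lies in the `(1 + b / 2) R`-neighbourhood of at most `4 + b` grid cells
  have hmult : ∀ n ∈ hband.toFinset, ((hgrid.toFinset.filter (n ∈ N ·)).card : ℝ) ≤ 4 + b :=
    fun n _ => by
      have hcard := Int.card_le_of_near (s := hgrid.toFinset.filter (n ∈ N ·)) (x := c.l n)
        (δ := b * R / 2 + R) (by positivity) hR fun m hm => by
          obtain ⟨hl, hr⟩ := (Real.Ioo_subset_Icc_iff (c.lt n)).1
            (Finset.mem_filter.1 (Finset.mem_filter.1 hm).2).2
          exact ⟨by linarith, by linarith [c.lt n]⟩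
      rwa [show 2 * (b * R / 2 + R) / R + 2 = 4 + b by field_simp; ring] at hcard
  rw [gridSum_eq_sum hgrid, c.bandSum_eq_sum hband]
  calc ∑ m ∈ hgrid.toFinset, μ.real (enlarge b (m * R) ((m + 1) * R)) ^ q
      ≤ ∑ m ∈ hgrid.toFinset, ((3 + b) / lam) ^ q * ∑ n ∈ N m, μ.real (c.I a n) ^ q :=
        Finset.sum_le_sum hterm
    _ = ((3 + b) / lam) ^ q * ∑ m ∈ hgrid.toFinset, ∑ n ∈ N m, μ.real (c.I a n) ^ q :=
        (Finset.mul_sum _ _ _).symm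
    _ ≤ ((3 + b) / lam) ^ q * ((4 + b) * ∑ n ∈ hband.toFinset, μ.real (c.I a n) ^ q) :=
        mul_le_mul_of_nonneg_left (Finset.sum_sum_le_mul_sum (fun m _ => Finset.filter_subset _ _)
          (fun _ _ => Real.rpow_nonneg measureReal_nonneg _) hmult) (by positivity)
    _ = _ := by ring

end FractalComplement

theorem stmt_10_general (F : Set ℝ) (hF : IsFractalSubset F) (c : FractalComplement F)
    (lam : ℝ) (hlam0 : 0 < lam) (hlac : Lacunary c lam)
    (μ : Measure ℝ) [IsProbabilityMeasure μ] (hsupp : HasSupport μ F)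
    (q a b : ℝ) (ha : 2 / lam ≤ a) (hb : 0 < b) :
    ∃ η₁ η₂ c₁ c₂ r₀ : ℝ, 0 < η₁ ∧ 0 < η₂ ∧ 0 < c₁ ∧ 0 < c₂ ∧ 0 < r₀ ∧
      ∀ R : ℝ, 0 < R → R ≤ r₀ →
        c₁ * (∑' n : ℕ, if lam * η₁ * R ≤ c.len n ∧ c.len n ≤ η₁ * R
                then (μ (c.I a n)).toReal ^ q else 0) ≤ gridSum μ b q R ∧
        gridSum μ b q R ≤
          c₂ * (∑' n : ℕ, if lam * η₂ * R ≤ c.len n ∧ c.len n ≤ η₂ * R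
                then (μ (c.I a n)).toReal ^ q else 0) := by
  have hF01 := hF.2.1
  have ha' : 2 ≤ a * lam := (div_le_iff₀ hlam0).1 ha
  have ha0 : 0 < a := (div_pos two_pos hlam0).trans_le ha
  -- with `η = b / (2 + a)`, an `Ī_n^a` of length `≤ η R` near a cell lies in its enlargement `B̄^b`
  set η := b / (2 + a)
  have hη : 0 < η := by positivity
  have hηb : (2 + a) * η ≤ b := (mul_div_cancel₀ b (by positivity)).le
  rcases le_or_gt 0 q with hq | hq
  · refine ⟨η, 1, lam * η / (1 + η), ((3 + b) / lam) ^ q * (4 + b), 1, hη, one_pos,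
      by positivity, by positivity, one_pos, fun R hR hR1 => ⟨?_, ?_⟩⟩
    · exact c.mul_bandSum_le_gridSum_of_nonneg hF01 hsupp hlam0 hη ha0.le hηb hq hR
    · rw [mul_one, one_mul]
      exact c.gridSum_le_mul_bandSum_of_nonneg hlac hF01 hsupp hlam0 ha' hb.le hq hR hR1
  · -- with `η₁ = (2 + b) / (a λ)`, every `Ī_n^a` with `|I_n| ≥ λ η₁ R` contains the `B̄^b` it meets
    set η₁ := (2 + b) / (a * lam)
    have hη₁ : 0 < η₁ := by positivity
    have haη₁ : 2 + b ≤ a * lam * η₁ := (mul_div_cancel₀ _ (by positivity)).ge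
    refine ⟨η₁, η, lam * η₁ / (1 + η₁), 2 * η + 2, (2 + a) / b, hη₁, hη, by positivity,
      by positivity, by positivity, fun R hR hR1 => ⟨?_, ?_⟩⟩
    · exact c.mul_bandSum_le_gridSum_of_neg hF01 hsupp hlam0 hη₁ ha0.le hb.le haη₁ hq hR
    · refine c.gridSum_le_mul_bandSum_of_neg hlac hF01 hsupp hlam0 hη ha0 hηb hq hR ?_
      rwa [div_mul_eq_mul_div, div_le_one (by positivity), ← le_div_iff₀' hb]

/-- comparison of grid moment sums with moment sums over the enlarged
complementary intervals of comparable length (Proposition 4.3 of the paper). -/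
theorem stmt_10 (F : Set ℝ) (hF : IsFractalSubset F) (c : FractalComplement F)
    (lam : ℝ) (hlam0 : 0 < lam) (hlam1 : lam ≤ 1) (hlac : Lacunary c lam)
    (μ : Measure ℝ) [IsProbabilityMeasure μ] [NullSingletonClass μ] (hsupp : HasSupport μ F)
    (q a b : ℝ) (ha : 2 / lam ≤ a) (hb : 0 < b) :
    ∃ η₁ η₂ c₁ c₂ r₀ : ℝ, 0 < η₁ ∧ 0 < η₂ ∧ 0 < c₁ ∧ 0 < c₂ ∧ 0 < r₀ ∧
      ∀ R : ℝ, 0 < R → R ≤ r₀ →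
        c₁ * (∑' n : ℕ, if lam * η₁ * R ≤ c.len n ∧ c.len n ≤ η₁ * R
                then (μ (c.I a n)).toReal ^ q else 0) ≤ gridSum μ b q R ∧
        gridSum μ b q R ≤
          c₂ * (∑' n : ℕ, if lam * η₂ * R ≤ c.len n ∧ c.len n ≤ η₂ * R
                then (μ (c.I a n)).toReal ^ q else 0) :=
  stmt_10_general F hF c lam hlam0 hlac μ hsupp q a b ha hb
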